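/- Let Φ = (G, φ) be a 2-connected non-geodetic T-gain graph, and let s, t be two distance-incompatible vertices whose distance d(s,t) is minimal among all distance-incompatible pairs. Then there exist two internally disjoint shortest paths from s to t with different gains. -/

import Mathlib

open Matrix
open scoped Classical

noncomputable section

namespace GG

variable {V : Type*}

/-- The gain of a walk: product of the gains of its oriented edges. -/
def walkGain {G : SimpleGraph V} (φ : V → V → ℂ) {u v : V} (p : G.Walk u v) : ℂ :=
  (p.darts.map (fun d => φ d.toProd.1 d.toProd.2)).prod

/-- `φ` is a `𝕋`-gain function on `G`: unit modulus on edges, inverse under reversal. -/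
def IsGain (G : SimpleGraph V) (φ : V → V → ℂ) : Prop :=
  (∀ i j, G.Adj i j → ‖φ i j‖ = 1) ∧ (∀ i j, G.Adj i j → φ j i = (φ i j)⁻¹)

/-- Adjacency matrix of a gain graph. -/
def gainAdj [Fintype V] [DecidableEq V] (G : SimpleGraph V) (φ : V → V → ℂ) :
    Matrix V V ℂ := fun i j => if G.Adj i j then φ i j else 0

/-- A gain graph is balanced if every cycle has gain 1. -/
def GBalanced (G : SimpleGraph V) (φ : V → V → ℂ) : Prop :=
  ∀ (u : V) (c : G.Walk u u), c.IsCycle → walkGain φ c = 1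

/-- All shortest paths between any pair of vertices have the same gain. -/
def DistCompatible (G : SimpleGraph V) (φ : V → V → ℂ) : Prop :=
  ∀ (s t : V) (p q : G.Walk s t), p.length = G.dist s t → q.length = G.dist s t →
    walkGain φ p = walkGain φ q

/-- The set of gains of shortest `s`-`t` paths. -/
def shortestGains (G : SimpleGraph V) (φ : V → V → ℂ) (s t : V) : Set ℂ :=
  {z | ∃ p : G.Walk s t, p.length = G.dist s t ∧ walkGain φ p = z}

/-- The element of `S` maximizing the real part, ties broken by maximal imaginary part
(correct for finite nonempty sets of gains). -/
def lexMaxGain (S : Set ℂ) : ℂ :=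
  ⟨sSup (Complex.re '' S), sSup (Complex.im '' {z ∈ S | z.re = sSup (Complex.re '' S)})⟩

/-- The element of `S` minimizing the real part, ties broken by minimal imaginary part. -/
def lexMinGain (S : Set ℂ) : ℂ :=
  ⟨sInf (Complex.re '' S), sInf (Complex.im '' {z ∈ S | z.re = sInf (Complex.re '' S)})⟩

/-- The maximum gain distance matrix `D^max_<(Φ)` with respect to a strict order `lt`. -/
def Dmax [Fintype V] [DecidableEq V] (G : SimpleGraph V) (φ : V → V → ℂ)
    (lt : V → V → Prop) : Matrix V V ℂ := fun s t =>
  if lt s t then lexMaxGain (shortestGains G φ s t) * (G.dist s t : ℂ)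
  else if lt t s then (starRingEnd ℂ) (lexMaxGain (shortestGains G φ t s)) * (G.dist s t : ℂ)
  else 0

/-- The minimum gain distance matrix `D^min_<(Φ)` with respect to a strict order `lt`. -/
def Dmin [Fintype V] [DecidableEq V] (G : SimpleGraph V) (φ : V → V → ℂ)
    (lt : V → V → Prop) : Matrix V V ℂ := fun s t =>
  if lt s t then lexMinGain (shortestGains G φ s t) * (G.dist s t : ℂ)
  else if lt t s then (starRingEnd ℂ) (lexMinGain (shortestGains G φ t s)) * (G.dist s t : ℂ)
  else 0

/-- Vertex order independence: the gain distance matrices agree for the standard order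
and its reverse. -/
def OrderIndependent [Fintype V] [DecidableEq V] [LinearOrder V] (G : SimpleGraph V)
    (φ : V → V → ℂ) : Prop :=
  Dmax G φ (· < ·) = Dmax G φ (fun a b => b < a) ∧
  Dmin G φ (· < ·) = Dmin G φ (fun a b => b < a)

/-- The largest (real) eigenvalue of a matrix. -/
def maxEig [Fintype V] [DecidableEq V] (A : Matrix V V ℂ) : ℝ :=
  sSup {r : ℝ | (r : ℂ) ∈ spectrum ℂ A}

/-- The spectral radius of a matrix. -/
def specRad [Fintype V] [DecidableEq V] (A : Matrix V V ℂ) : ℝ :=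
  sSup {r : ℝ | ∃ z ∈ spectrum ℂ A, ‖z‖ = r}

/-- The distance matrix of the underlying graph, as a complex matrix. -/
def distMatrix [Fintype V] [DecidableEq V] (G : SimpleGraph V) : Matrix V V ℂ :=
  fun i j => (G.dist i j : ℂ)

/-- Weighted gain adjacency matrix `A(Φ_w)`. -/
def wGainAdj [Fintype V] [DecidableEq V] (G : SimpleGraph V) (φ : V → V → ℂ)
    (w : V → V → ℝ) : Matrix V V ℂ := fun i j => if G.Adj i j then φ i j * (w i j : ℂ) else 0

/-- Weighted adjacency matrix `A(G_w)` of the underlying weighted graph. -/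
def wAdj [Fintype V] [DecidableEq V] (G : SimpleGraph V) (w : V → V → ℝ) :
    Matrix V V ℂ := fun i j => if G.Adj i j then (w i j : ℂ) else 0


/-- `G` is 2-connected: connected, at least 3 vertices, and no cut vertex. -/
def TwoConnected {V : Type*} [Fintype V] (G : SimpleGraph V) : Prop :=
  G.Connected ∧ 3 ≤ Fintype.card V ∧
    ∀ v : V, (G.induce ({v}ᶜ : Set V)).Connected

/-!
If two shortest `s`-`t` paths with different gains met at an internal vertex `x`, splitting
both at `x` would make `(s, x)` or `(x, t)` distance-incompatible, and both pairs are strictly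
closer than `(s, t)`. So for a closest incompatible pair, any two shortest paths with different
gains are already internally disjoint.
-/

open SimpleGraph

theorem _root_.SimpleGraph.Walk.IsPath.ne_of_mem_tail_dropLast_support {G : SimpleGraph V}
    {u v x : V} {p : G.Walk u v} (hp : p.IsPath) (hx : x ∈ p.support.tail.dropLast) :
    x ≠ u ∧ x ≠ v := by
  have ne_start : ∀ {u v : V} {p : G.Walk u v}, p.IsPath → x ∈ p.support.tail.dropLast →
      x ≠ u := by
    rintro u v p hp hx rfl
    have hnd := hp.support_nodup
    rw [← p.cons_tail_support, List.nodup_cons] at hnd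
    exact hnd.1 (List.mem_of_mem_dropLast hx)
  refine ⟨ne_start hp hx, ne_start hp.reverse ?_⟩
  rwa [Walk.support_reverse, List.tail_reverse, List.dropLast_reverse, List.tail_dropLast,
    List.mem_reverse]

theorem _root_.SimpleGraph.Walk.mem_support_of_mem_tail_dropLast_support {G : SimpleGraph V}
    {u v x : V} {p : G.Walk u v} (hx : x ∈ p.support.tail.dropLast) : x ∈ p.support :=
  List.mem_of_mem_tail (List.mem_of_mem_dropLast hx)

theorem _root_.SimpleGraph.Walk.dist_add_dist_of_mem_support {G : SimpleGraph V} {u v x : V}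
    {p : G.Walk u v} (hp : p.length = G.dist u v) (hx : x ∈ p.support) :
    G.dist u x + G.dist x v = G.dist u v := by
  rw [← length_eq_dist_of_subwalk hp (p.isSubwalk_takeUntil hx),
    ← length_eq_dist_of_subwalk hp (p.isSubwalk_dropUntil hx), ← Walk.length_append,
    p.take_spec hx, hp]

theorem _root_.SimpleGraph.Walk.dist_lt_of_mem_tail_dropLast_support {G : SimpleGraph V}
    {u v x : V} {p : G.Walk u v} (hp : p.length = G.dist u v)
    (hx : x ∈ p.support.tail.dropLast) :
    G.dist u x < G.dist u v ∧ G.dist x v < G.dist u v := by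
  have hx' := p.mem_support_of_mem_tail_dropLast_support hx
  obtain ⟨hxu, hxv⟩ := (p.isPath_of_length_eq_dist hp).ne_of_mem_tail_dropLast_support hx
  have hux_pos := (p.takeUntil x hx').reachable.pos_dist_of_ne hxu.symm
  have hxv_pos := (p.dropUntil x hx').reachable.pos_dist_of_ne hxv
  have := p.dist_add_dist_of_mem_support hp hx'
  omega

theorem walkGain_append {G : SimpleGraph V} (φ : V → V → ℂ) {u v w : V}
    (p : G.Walk u v) (q : G.Walk v w) :
    walkGain φ (p.append q) = walkGain φ p * walkGain φ q := by
  simp [walkGain, Walk.darts_append]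

def DistIncompatible (G : SimpleGraph V) (φ : V → V → ℂ) (s t : V) : Prop :=
  ∃ p q : G.Walk s t, p.length = G.dist s t ∧ q.length = G.dist s t ∧
    walkGain φ p ≠ walkGain φ q

theorem distIncompatible_or_of_mem_support {G : SimpleGraph V} {φ : V → V → ℂ} {s t x : V}
    {p q : G.Walk s t} (hp : p.length = G.dist s t) (hq : q.length = G.dist s t)
    (hpq : walkGain φ p ≠ walkGain φ q) (hxp : x ∈ p.support) (hxq : x ∈ q.support) :
    DistIncompatible G φ s x ∨ DistIncompatible G φ x t := by
  have split_gain : ∀ r : G.Walk s t, (hx : x ∈ r.support) →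
      walkGain φ r = walkGain φ (r.takeUntil x hx) * walkGain φ (r.dropUntil x hx) :=
    fun r hx => by rw [← walkGain_append, r.take_spec hx]
  by_cases hleft : walkGain φ (p.takeUntil x hxp) = walkGain φ (q.takeUntil x hxq)
  · refine .inr ⟨_, _, length_eq_dist_of_subwalk hp (p.isSubwalk_dropUntil hxp),
      length_eq_dist_of_subwalk hq (q.isSubwalk_dropUntil hxq), fun hright => hpq ?_⟩
    rw [split_gain p hxp, split_gain q hxq, hleft, hright]
  · exact .inl ⟨_, _, length_eq_dist_of_subwalk hp (p.isSubwalk_takeUntil hxp),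
      length_eq_dist_of_subwalk hq (q.isSubwalk_takeUntil hxq), hleft⟩

theorem incompatible_pair_internally_disjoint_general {V : Type*}
    (G : SimpleGraph V) (φ : V → V → ℂ)
    (s t : V)
    (hinc : ∃ p q : G.Walk s t, p.length = G.dist s t ∧ q.length = G.dist s t ∧
      walkGain φ p ≠ walkGain φ q)
    (hmin : ∀ s' t' : V,
      (∃ p q : G.Walk s' t', p.length = G.dist s' t' ∧ q.length = G.dist s' t' ∧
        walkGain φ p ≠ walkGain φ q) → G.dist s t ≤ G.dist s' t') :
    ∃ p q : G.Walk s t, p.length = G.dist s t ∧ q.length = G.dist s t ∧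
      walkGain φ p ≠ walkGain φ q ∧
      List.Disjoint p.support.tail.dropLast q.support.tail.dropLast := by
  obtain ⟨p, q, hp, hq, hpq⟩ := hinc
  refine ⟨p, q, hp, hq, hpq, fun x hxp hxq => ?_⟩
  obtain ⟨hsx, hxt⟩ := p.dist_lt_of_mem_tail_dropLast_support hp hxp
  rcases distIncompatible_or_of_mem_support hp hq hpq
    (p.mem_support_of_mem_tail_dropLast_support hxp)
    (q.mem_support_of_mem_tail_dropLast_support hxq) with h | h
  · exact (hmin s x h).not_gt hsx
  · exact (hmin x t h).not_gt hxt

/-- in a 2-connected non-geodetic gain graph, a distance-incompatible pair of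
least distance is joined by two internally disjoint shortest paths of different gains. -/
theorem incompatible_pair_internally_disjoint {V : Type*} [Fintype V] [DecidableEq V]
    (G : SimpleGraph V) (φ : V → V → ℂ) (hφ : IsGain G φ) (h2 : TwoConnected G)
    (hngeo : ∃ (s t : V) (p q : G.Walk s t),
      p.length = G.dist s t ∧ q.length = G.dist s t ∧ p ≠ q)
    (s t : V)
    (hinc : ∃ p q : G.Walk s t, p.length = G.dist s t ∧ q.length = G.dist s t ∧
      walkGain φ p ≠ walkGain φ q)
    (hmin : ∀ s' t' : V,
      (∃ p q : G.Walk s' t', p.length = G.dist s' t' ∧ q.length = G.dist s' t' ∧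
        walkGain φ p ≠ walkGain φ q) → G.dist s t ≤ G.dist s' t') :
    ∃ p q : G.Walk s t, p.length = G.dist s t ∧ q.length = G.dist s t ∧
      walkGain φ p ≠ walkGain φ q ∧
      List.Disjoint p.support.tail.dropLast q.support.tail.dropLast :=
  incompatible_pair_internally_disjoint_general G φ s t hinc hmin

end GG
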